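/- Let p and m + 1 be primes with m ≥ 1, p ≠ m + 1 and p ≢ 1 (mod m + 1), and set ℓ = (p^(m+1) − 1)/(p − 1) and q = (p^m − 1)/(p − 1). Let D be a finset of ZMod ℓ with cardinality q whose image under x ↦ p·x equals D, and let k = q/(m+1). Then there exists a function d : Fin k → ZMod ℓ such that the map (u, i) ↦ p^u · d(i), defined on Fin (m+1) × Fin k, is injective and its image is exactly the set D. In other words, the elements of D can be ordered in a Frobenius compatible way. -/

import Mathlib

/-!
In `ZMod ℓ` we have `p ^ (m + 1) = 1`, since `ℓ = 1 + p + ⋯ + p ^ m`, and `p - 1` is a unit,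
since `ℓ ≡ m + 1 [MOD p - 1]` and the prime `m + 1` does not divide `p - 1`. If `p ^ u * x = x`
with `0 < u ≤ m`, then `u` is invertible modulo the prime `m + 1`, so `p * x = x` and `x = 0`:
multiplication by `p` permutes the nonzero residues in orbits of size exactly `m + 1`. By Fermat,
`(p - 1) * q = p ^ m - 1 ≡ 0 [MOD m + 1]`, so `m + 1 ∣ q`; hence `0 ∉ D`, for otherwise the
`q - 1` elements of `D \ {0}` would form a union of orbits. Thus `D` is a disjoint union of
`q / (m + 1)` orbits, and `d` lists one representative of each.
-/

open Finset

section Monoid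

variable {M : Type*} [Monoid M] {P x : M} {n : ℕ}

theorem mul_eq_self_of_pow_mul_eq_self (hP : P ^ n = 1) (hn : 1 < n) {u : ℕ}
    (hcop : u.Coprime n) (hu : P ^ u * x = x) : P * x = x := by
  obtain ⟨v, -, hv⟩ := Nat.exists_mul_mod_eq_one_of_coprime hcop hn
  have hstab : P ^ u ∈ MulAction.stabilizerSubmonoid M x := hu
  have hPv : (P ^ u) ^ v = P := by rw [← pow_mul, pow_eq_pow_mod _ hP, hv, pow_one]
  simpa [hPv] using pow_mem hstab v

theorem pow_mul_mem_range_pow_mul (hP : P ^ n = 1) (hn : 0 < n) (a : ℕ) :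
    P ^ a * x ∈ Set.range fun u : Fin n => P ^ (u : ℕ) * x :=
  ⟨⟨a % n, Nat.mod_lt a hn⟩, by simp only [← pow_eq_pow_mod a hP]⟩

theorem mem_range_pow_mul_of_mul_mem (hP : P ^ n = 1) (hn : 0 < n) {y : M}
    (hy : P * y ∈ Set.range fun u : Fin n => P ^ (u : ℕ) * x) :
    y ∈ Set.range fun u : Fin n => P ^ (u : ℕ) * x := by
  obtain ⟨u, hu : P ^ (u : ℕ) * x = P * y⟩ := hy
  have hy : y = P ^ (n - 1 + u) * x := by
    rw [pow_add, mul_assoc, hu, ← mul_assoc, ← pow_succ, Nat.sub_add_cancel hn, hP, one_mul]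
  exact hy ▸ pow_mul_mem_range_pow_mul hP hn _

theorem pow_mul_mem_of_forall_mul_mem {S : Set M} (hS : ∀ y ∈ S, P * y ∈ S) (hx : x ∈ S)
    (u : ℕ) : P ^ u * x ∈ S := by
  induction u with
  | zero => simpa using hx
  | succ u ih => simpa only [pow_succ', mul_assoc] using hS _ ih

/-- For `P = p` in `ZMod ℓ`, this is a Frobenius compatible ordering of `S`. -/
def IsOrbitOrdering (P : M) (n : ℕ) {k : ℕ} (d : Fin k → M) (S : Set M) : Prop :=
  Function.Injective (fun ui : Fin n × Fin k => P ^ (ui.1 : ℕ) * d ui.2) ∧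
    Set.range (fun ui : Fin n × Fin k => P ^ (ui.1 : ℕ) * d ui.2) = S

theorem isOrbitOrdering_elim0 : IsOrbitOrdering P n Fin.elim0 ∅ :=
  ⟨fun ui => ui.2.elim0, Set.range_eq_empty _⟩

theorem IsOrbitOrdering.card_eq [DecidableEq M] {k : ℕ} {d : Fin k → M} {S : Finset M}
    (h : IsOrbitOrdering P n d S) : #S = n * k := by
  have hS : S = univ.image fun ui : Fin n × Fin k => P ^ (ui.1 : ℕ) * d ui.2 := by
    rw [← coe_inj, coe_image, coe_univ, Set.image_univ, h.2]
  rw [hS, card_image_of_injective _ h.1, card_univ, Fintype.card_prod, Fintype.card_fin,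
    Fintype.card_fin]

theorem IsOrbitOrdering.cons {k : ℕ} {d : Fin k → M} {S : Set M} (h : IsOrbitOrdering P n d S)
    (hx : Function.Injective fun u : Fin n => P ^ (u : ℕ) * x)
    (hdisj : Disjoint (Set.range fun u : Fin n => P ^ (u : ℕ) * x) S) :
    IsOrbitOrdering P n (Fin.cons x d : Fin (k + 1) → M)
      ((Set.range fun u : Fin n => P ^ (u : ℕ) * x) ∪ S) := by
  have hmem : ∀ (u : Fin n) (i : Fin k), P ^ (u : ℕ) * d i ∈ S :=
    fun u i => h.2 ▸ ⟨(u, i), rfl⟩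
  have hne : ∀ (u v : Fin n) i, P ^ (u : ℕ) * x ≠ P ^ (v : ℕ) * d i := fun u v i he =>
    Set.disjoint_left.mp hdisj ⟨u, rfl⟩ (show P ^ (u : ℕ) * x ∈ S from he ▸ hmem v i)
  constructor
  · rintro ⟨u, i⟩ ⟨v, j⟩ huv
    induction i using Fin.cases <;> induction j using Fin.cases <;>
      simp only [Fin.cons_zero, Fin.cons_succ] at huv
    · rw [hx huv]
    · exact absurd huv (hne _ _ _)
    · exact absurd huv.symm (hne _ _ _)
    · simpa using h.1 (a₁ := (u, _)) (a₂ := (v, _)) huv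
  · rw [← h.2]
    ext y
    simp only [Set.mem_range, Set.mem_union, Prod.exists, Fin.exists_fin_succ, Fin.cons_zero,
      Fin.cons_succ, exists_or]

theorem exists_isOrbitOrdering [DecidableEq M] (hP : P ^ n = 1) (hn : 0 < n) (S : Finset M)
    (hS : ∀ x ∈ S, P * x ∈ S)
    (hfree : ∀ x ∈ S, Function.Injective fun u : Fin n => P ^ (u : ℕ) * x) :
    ∃ (k : ℕ) (d : Fin k → M), IsOrbitOrdering P n d S := by
  induction S using Finset.strongInduction with
  | H S ih =>
  obtain rfl | ⟨x, hx⟩ := S.eq_empty_or_nonempty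
  · exact ⟨0, Fin.elim0, by simpa using isOrbitOrdering_elim0⟩
  set O := univ.image fun u : Fin n => P ^ (u : ℕ) * x with hO
  have hO_coe : (O : Set M) = Set.range fun u : Fin n => P ^ (u : ℕ) * x := by
    simp [hO]
  have hOS : O ⊆ S := by
    simpa [hO, image_subset_iff] using fun u : Fin n => pow_mul_mem_of_forall_mul_mem hS hx u
  have hxO : x ∈ O := mem_image.mpr ⟨⟨0, hn⟩, mem_univ _, by simp⟩
  have hclosed : ∀ y ∈ S \ O, P * y ∈ S \ O := by
    intro y hy
    rw [← mem_coe, coe_sdiff, hO_coe] at hy ⊢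
    exact ⟨hS y hy.1, fun h => hy.2 (mem_range_pow_mul_of_mul_mem hP hn h)⟩
  obtain ⟨k, d, hd⟩ := ih (S \ O) (sdiff_ssubset hOS ⟨x, hxO⟩) hclosed
    fun y hy => hfree y (mem_sdiff.mp hy).1
  refine ⟨k + 1, Fin.cons x d, ?_⟩
  have := hd.cons (hfree x hx) (by rw [← hO_coe, coe_sdiff]; exact Set.disjoint_sdiff_right)
  rwa [← hO_coe, coe_sdiff, Set.union_sdiff_cancel (coe_subset.mpr hOS)] at this

end Monoid

section CommRing

variable {R : Type*} [CommRing R] {P x : R} {n : ℕ}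

theorem injective_pow_mul_of_isUnit_sub_one (hP : P ^ n = 1) (hn : n.Prime)
    (hP1 : IsUnit (P - 1)) (hx : x ≠ 0) :
    Function.Injective fun u : Fin n => P ^ (u : ℕ) * x := by
  have hPunit : IsUnit P := IsUnit.of_pow_eq_one hP hn.ne_zero
  suffices key : ∀ a b : Fin n, a < b → P ^ (a : ℕ) * x ≠ P ^ (b : ℕ) * x by
    intro a b hab
    by_contra hne
    rcases lt_or_gt_of_ne hne with h | h
    exacts [key a b h hab, key b a h hab.symm]
  intro a b hab he
  have hfix : P ^ ((b : ℕ) - a) * x = x := by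
    apply (hPunit.pow a).mul_left_cancel
    rw [← mul_assoc, ← pow_add, Nat.add_sub_cancel' hab.le, he]
  have hcop : ((b : ℕ) - a).Coprime n :=
    Nat.Coprime.symm <| hn.coprime_iff_not_dvd.mpr <|
      Nat.not_dvd_of_pos_of_lt (by omega) (by omega)
  apply hx
  rw [← hP1.mul_right_eq_zero, sub_mul, one_mul,
    mul_eq_self_of_pow_mul_eq_self hP hn.one_lt hcop hfix, sub_self]

theorem exists_isOrbitOrdering_of_dvd_card [DecidableEq R] (hP : P ^ n = 1) (hn : n.Prime)
    (hP1 : IsUnit (P - 1)) (S : Finset R) (hS : S.image (fun x => P * x) = S)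
    (hdvd : n ∣ #S) : ∃ d : Fin (#S / n) → R, IsOrbitOrdering P n d S := by
  have hPunit : IsUnit P := IsUnit.of_pow_eq_one hP hn.ne_zero
  have hclosed : ∀ x ∈ S, P * x ∈ S := fun x hx => hS ▸ mem_image_of_mem _ hx
  have hfree : ∀ x ∈ S.erase 0, Function.Injective fun u : Fin n => P ^ (u : ℕ) * x :=
    fun x hx => injective_pow_mul_of_isUnit_sub_one hP hn hP1 (ne_of_mem_erase hx)
  have h0 : (0 : R) ∉ S := by
    intro h0
    have hclosed' : ∀ x ∈ S.erase 0, P * x ∈ S.erase 0 := fun x hx =>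
      mem_erase.mpr ⟨hPunit.mul_right_eq_zero.not.mpr (ne_of_mem_erase hx),
        hclosed x (mem_of_mem_erase hx)⟩
    obtain ⟨k, d, hd⟩ := exists_isOrbitOrdering hP hn.pos (S.erase 0) hclosed' hfree
    have hdvd' : n ∣ #S - 1 := card_erase_of_mem h0 ▸ hd.card_eq ▸ dvd_mul_right n k
    have hS_pos : 0 < #S := card_pos.mpr ⟨0, h0⟩
    have : n ∣ 1 := by simpa [Nat.sub_sub_self hS_pos] using Nat.dvd_sub hdvd hdvd'
    exact hn.one_lt.ne' (Nat.dvd_one.mp this)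
  obtain ⟨k, d, hd⟩ := exists_isOrbitOrdering hP hn.pos S hclosed fun x hx =>
    hfree x (mem_erase.mpr ⟨ne_of_mem_of_not_mem hx h0, hx⟩)
  rw [hd.card_eq, Nat.mul_div_cancel_left k hn.pos]
  exact ⟨d, hd⟩

end CommRing

theorem Nat.geom_sum_modEq_sub_one {p : ℕ} (hp : 1 ≤ p) (n : ℕ) :
    ∑ i ∈ range n, p ^ i ≡ n [MOD p - 1] := by
  have hp1 : p ≡ 1 [MOD p - 1] := ((Nat.modEq_iff_dvd' hp).mpr dvd_rfl).symm
  simpa using Nat.ModEq.sum (s := range n) fun i _ => hp1.pow i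

theorem Nat.coprime_sub_one_geom_sum {p r : ℕ} (hp : 1 ≤ p) (hr : r.Prime)
    (hpr : ¬ p ≡ 1 [MOD r]) : Nat.Coprime (p - 1) (∑ i ∈ range r, p ^ i) := by
  have hr_cop : Nat.Coprime r (p - 1) :=
    hr.coprime_iff_not_dvd.mpr fun h => hpr ((Nat.modEq_iff_dvd' hp).mpr h).symm
  exact Nat.Coprime.symm ((Nat.geom_sum_modEq_sub_one hp r).gcd_eq.trans hr_cop)

theorem Nat.prime_dvd_geom_sum {p r : ℕ} (hr : r.Prime) (hrp : ¬ r ∣ p)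
    (hpr : ¬ p ≡ 1 [MOD r]) : r ∣ ∑ i ∈ range (r - 1), p ^ i := by
  have := Fact.mk hr
  have hp0 : (p : ZMod r) ≠ 0 := mt (ZMod.natCast_eq_zero_iff p r).mp hrp
  have hp1 : (p : ZMod r) - 1 ≠ 0 :=
    sub_ne_zero.mpr (by exact_mod_cast mt (ZMod.natCast_eq_natCast_iff p 1 r).mp hpr)
  have hsum := geom_sum_mul (p : ZMod r) (r - 1)
  rw [ZMod.pow_card_sub_one_eq_one hp0, sub_self] at hsum
  rw [← ZMod.natCast_eq_zero_iff]
  push_cast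
  exact (mul_eq_zero_iff_right hp1).mp hsum

theorem pow_eq_one_of_geom_sum_eq_zero {R : Type*} [Ring R] {x : R} {n : ℕ}
    (h : ∑ i ∈ range n, x ^ i = 0) : x ^ n = 1 := by
  rw [← sub_eq_zero, ← mul_geom_sum, h, mul_zero]

theorem stmt_18_general (p m ℓ q k : ℕ) (hp : p.Prime) (hm1 : (m + 1).Prime)
    (hne : p ≠ m + 1) (hmod : ¬ p ≡ 1 [MOD m + 1])
    (hℓ : ℓ = (p ^ (m + 1) - 1) / (p - 1)) (hq : q = (p ^ m - 1) / (p - 1))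
    (hk : k = q / (m + 1))
    (D : Finset (ZMod ℓ)) (hcard : D.card = q)
    (hfrob : D.image (fun x => (p : ZMod ℓ) * x) = D) :
    ∃ d : Fin k → ZMod ℓ,
      Function.Injective
        (fun ui : Fin (m + 1) × Fin k => (p : ZMod ℓ) ^ (ui.1 : ℕ) * d ui.2) ∧
      Set.range
        (fun ui : Fin (m + 1) × Fin k => (p : ZMod ℓ) ^ (ui.1 : ℕ) * d ui.2) = ↑D := by
  rw [← Nat.geomSum_eq hp.two_le] at hℓ hq
  have hP : (p : ZMod ℓ) ^ (m + 1) = 1 := by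
    have hℓ0 : ((∑ i ∈ range (m + 1), p ^ i : ℕ) : ZMod ℓ) = 0 := by
      rw [← hℓ, ZMod.natCast_self]
    exact pow_eq_one_of_geom_sum_eq_zero (by exact_mod_cast hℓ0)
  have hP1 : IsUnit ((p : ZMod ℓ) - 1) := by
    have := (ZMod.isUnit_iff_coprime (p - 1) ℓ).mpr
      (hℓ ▸ Nat.coprime_sub_one_geom_sum hp.one_le hm1 hmod)
    rwa [Nat.cast_sub hp.one_le, Nat.cast_one] at this
  have hdvd : m + 1 ∣ D.card := by
    have hrp : ¬ m + 1 ∣ p := fun h => hne ((Nat.prime_dvd_prime_iff_eq hm1 hp).mp h).symm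
    simpa [hcard, hq] using Nat.prime_dvd_geom_sum hm1 hrp hmod
  obtain ⟨d, hd⟩ := exists_isOrbitOrdering_of_dvd_card hP hm1 hP1 D hfrob hdvd
  subst hk hcard
  exact ⟨d, hd⟩

/-- Corollary 4.3: under the hypotheses on the primes `p` and `m + 1`, the elements of a
Frobenius difference set `D ⊆ ZMod ℓ` of cardinality `q` can be ordered in a Frobenius
compatible way: there is `d : Fin k → ZMod ℓ`, `k = q/(m+1)`, such that
`(u, i) ↦ p^u · d(i)` is injective with image exactly `D`. -/
theorem stmt_18 (p m ℓ q k : ℕ) (hp : p.Prime) (hm1 : (m + 1).Prime) (hm : 1 ≤ m)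
    (hne : p ≠ m + 1) (hmod : ¬ p ≡ 1 [MOD m + 1])
    (hℓ : ℓ = (p ^ (m + 1) - 1) / (p - 1)) (hq : q = (p ^ m - 1) / (p - 1))
    (hk : k = q / (m + 1))
    (D : Finset (ZMod ℓ)) (hcard : D.card = q)
    (hfrob : D.image (fun x => (p : ZMod ℓ) * x) = D) :
    ∃ d : Fin k → ZMod ℓ,
      Function.Injective
        (fun ui : Fin (m + 1) × Fin k => (p : ZMod ℓ) ^ (ui.1 : ℕ) * d ui.2) ∧
      Set.range
        (fun ui : Fin (m + 1) × Fin k => (p : ZMod ℓ) ^ (ui.1 : ℕ) * d ui.2) = ↑D :=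
  stmt_18_general p m ℓ q k hp hm1 hne hmod hℓ hq hk D hcard hfrob
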